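/- If 1 → N → G → Q → 1 is a short exact sequence of groups, then rk_F(G) ≤ rk_F(N) + rk_F(Q). -/

import Mathlib

/-- `G` contains a direct product of `k` nonabelian free groups, i.e. `rk_F(G) ≥ k`. -/
def HasProdRank (G : Type*) [Group G] (k : ℕ) : Prop :=
  ∃ f : ((Fin k → FreeGroup Bool)) →* G, Function.Injective f

/-!
Let `φ : F^k ↪ G` and let `K` be the kernel of `F^k → G → Q`, a normal subgroup of `F^k`.
Because `F = F(a, b)` has trivial center, commuting an element of `K` with the `i`-th factor shows
that `K` is trivial in every coordinate `i` where it meets the factor `F_i` trivially; so these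
factors embed in `Q`. Where `K ∩ F_i ≠ 1`, this normal subgroup contains some `x ≠ 1` together with
a conjugate of `x` not commuting with it, and by Nielsen–Schreier these two generate a nonabelian
free group, hence a copy of `F`. The product of these copies lies in `K`, which `φ` maps into
`ker g = f(N)`.
-/

open scoped commutatorElement

namespace FreeGroup

lemma exists_letters_isReduced (first last : Bool × Bool) : ∃ p q : Bool × Bool, p ≠ first ∧
    IsReduced [last, p, q, first] ∧ IsReduced [last, (q.1, !q.2), (p.1, !p.2), first] := by
  revert first last
  unfold IsReduced
  decide

theorem exists_not_commute_conj {x : FreeGroup Bool} (hx : x ≠ 1) :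
    ∃ g, ¬Commute x (g * x * g⁻¹) := by
  set w := x.toWord with hw
  have hw_red : IsReduced w := isReduced_toWord
  have hw_ne : w ≠ [] := by rwa [hw, Ne, toWord_eq_nil_iff]
  obtain ⟨c, hc⟩ : ∃ c, w.head? = some c := ⟨_, List.head?_eq_some_head hw_ne⟩
  obtain ⟨d, hd⟩ : ∃ d, w.getLast? = some d := ⟨_, List.getLast?_eq_some_getLast hw_ne⟩
  -- With `g = pq`, the words `w·pq·w·q⁻¹p⁻¹` of `x·gxg⁻¹` and `pq·w·q⁻¹p⁻¹·w` of `gxg⁻¹·x` are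
  -- reduced, and they start with the different letters `c` and `p`.
  obtain ⟨p, q, hpc, hjoin, hjoin_inv⟩ := exists_letters_isReduced c d
  have h₁ : IsReduced (w ++ ([p, q] ++ w ++ [(q.1, !q.2), (p.1, !p.2)])) := by
    simp only [IsReduced, List.isChain_append, List.getLast?_append, hc, hd] at hw_red ⊢
    simp_all
  have h₂ : IsReduced ([p, q] ++ w ++ [(q.1, !q.2), (p.1, !p.2)] ++ w) := by
    simp only [IsReduced, List.isChain_append, List.getLast?_append, hc, hd] at hw_red ⊢
    simp_all
  refine ⟨mk [p, q], fun hcomm => hpc ?_⟩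
  have hinv : (mk [p, q])⁻¹ = mk [(q.1, !q.2), (p.1, !p.2)] := inv_mk
  rw [commute_iff_eq, ← mk_toWord (x := x), hinv] at hcomm
  simp only [mul_mk] at hcomm
  have hhead := congrArg (fun y => y.toWord.head?) hcomm
  simp only [toWord_mk, h₁.reduce_eq, h₂.reduce_eq, ← hw] at hhead
  simpa [hc] using hhead.symm

theorem center_eq_bot : Subgroup.center (FreeGroup Bool) = ⊥ := by
  refine (Subgroup.eq_bot_iff_forall _).mpr fun z hz => ?_
  by_contra hz_ne
  obtain ⟨g, hg⟩ := exists_not_commute_conj hz_ne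
  rw [Subgroup.mem_center_iff.mp hz g, mul_inv_cancel_right] at hg
  exact hg (Commute.refl z)

theorem commute_of_subsingleton {α : Type*} [Subsingleton α] (x y : FreeGroup α) :
    Commute x y := by
  cases isEmpty_or_nonempty α
  · exact Subsingleton.elim (α := FreeGroup α) x y ▸ Commute.refl x
  · have : Unique α := uniqueOfSubsingleton (Classical.arbitrary α)
    let := IsCyclic.commGroup (α := FreeGroup α)
    exact mul_comm x y

end FreeGroup

theorem IsFreeGroup.exists_injective_of_not_commute {M : Type*} [Group M] [IsFreeGroup M]
    {a b : M} (hab : ¬Commute a b) : ∃ j : FreeGroup Bool →* M, Function.Injective j := by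
  obtain ⟨s, t, hst⟩ : Nontrivial (IsFreeGroup.Generators M) := by
    refine not_subsingleton_iff_nontrivial.mp fun _ => hab ?_
    simpa using (FreeGroup.commute_of_subsingleton (toFreeGroup M a) (toFreeGroup M b)).map
      (toFreeGroup M).symm
  let e : Bool → IsFreeGroup.Generators M := fun i => if i then s else t
  have he : Function.Injective e := by
    intro i j; cases i <;> cases j <;> simp [e, hst, hst.symm]
  exact ⟨(toFreeGroup M).symm.toMonoidHom.comp (FreeGroup.map e),
    (toFreeGroup M).symm.injective.comp (FreeGroup.map_injective he)⟩

theorem Subgroup.exists_injective_freeGroup_of_not_commute {F : Type*} [Group F] [IsFreeGroup F]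
    (H : Subgroup F) {a b : F} (ha : a ∈ H) (hb : b ∈ H) (hab : ¬Commute a b) :
    ∃ j : FreeGroup Bool →* F, Function.Injective j ∧ j.range ≤ H := by
  obtain ⟨j, hj⟩ := IsFreeGroup.exists_injective_of_not_commute (M := H) (a := ⟨a, ha⟩)
    (b := ⟨b, hb⟩) fun h => hab (h.map H.subtype)
  exact ⟨H.subtype.comp j, Subtype.val_injective.comp hj, by rintro _ ⟨z, rfl⟩; exact (j z).2⟩

theorem Subgroup.Normal.exists_injective_freeGroup {H : Subgroup (FreeGroup Bool)}
    (hH : H.Normal) (hH_ne : H ≠ ⊥) :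
    ∃ j : FreeGroup Bool →* FreeGroup Bool, Function.Injective j ∧ j.range ≤ H := by
  obtain ⟨x, hx, hx_ne⟩ := H.bot_or_exists_ne_one.resolve_left hH_ne
  obtain ⟨g, hg⟩ := FreeGroup.exists_not_commute_conj hx_ne
  exact H.exists_injective_freeGroup_of_not_commute hx (hH.conj_mem x hx g) hg

theorem Subgroup.Normal.apply_eq_one_of_comap_mulSingle_eq_bot {ι : Type*} [DecidableEq ι]
    {M : ι → Type*} [∀ i, Group (M i)] {K : Subgroup (∀ i, M i)} (hK : K.Normal) {i : ι}
    (hM : Subgroup.center (M i) = ⊥) (hi : K.comap (MonoidHom.mulSingle M i) = ⊥) {p : ∀ i, M i}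
    (hp : p ∈ K) : p i = 1 := by
  rw [← Subgroup.mem_bot, ← hM, Subgroup.mem_center_iff]
  intro c
  have hcomm : ⁅Pi.mulSingle i c, p⁆ ∈ K := by
    rw [commutatorElement_def]
    exact mul_mem (hK.conj_mem p hp _) (inv_mem hp)
  have hsingle : ⁅Pi.mulSingle i c, p⁆ = Pi.mulSingle i ⁅c, p i⁆ := by
    ext j
    rcases eq_or_ne j i with rfl | hj
    · simp [commutatorElement_def]
    · simp [commutatorElement_def, hj]
  rw [hsingle, ← MonoidHom.mulSingle_apply, ← Subgroup.mem_comap, hi, Subgroup.mem_bot,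
    commutatorElement_eq_one_iff_mul_comm] at hcomm
  exact hcomm

theorem Subgroup.Normal.exists_injective_pi_freeGroup {ι : Type*} [Finite ι] [DecidableEq ι]
    {K : Subgroup (ι → FreeGroup Bool)} (hK : K.Normal) :
    ∃ ε : ({i // K.comap (MonoidHom.mulSingle _ i) ≠ ⊥} → FreeGroup Bool) →* (ι → FreeGroup Bool),
      Function.Injective ε ∧ ε.range ≤ K := by
  choose j hj_inj hj_le using fun i : {i // K.comap (MonoidHom.mulSingle _ i) ≠ ⊥} =>
    (hK.comap _).exists_injective_freeGroup i.2
  refine ⟨(Function.ExtendByOne.hom _ Subtype.val).comp (MonoidHom.piMap j),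
    (Function.extend_injective Subtype.val_injective (1 : ι → FreeGroup Bool)).comp
      fun u v huv => funext fun i => hj_inj i (congrFun huv i), ?_⟩
  rintro _ ⟨u, rfl⟩
  refine Subgroup.pi_mem_of_mulSingle_mem _ fun i => ?_
  simp only [MonoidHom.comp_apply, Function.ExtendByOne.hom_apply]
  by_cases hi : K.comap (MonoidHom.mulSingle _ i) ≠ ⊥
  · have hext : Function.extend Subtype.val (MonoidHom.piMap j u) 1 i = j ⟨i, hi⟩ (u ⟨i, hi⟩) :=
      Subtype.val_injective.extend_apply _ _ ⟨i, hi⟩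
    rw [hext]
    exact Subgroup.mem_comap.mp (hj_le ⟨i, hi⟩ ⟨_, rfl⟩)
  · rw [Function.extend_apply' _ _ _ fun ⟨i', hi'⟩ => hi (hi' ▸ i'.2)]
    simp

theorem MonoidHom.injective_comp_extendByOne {ι M Q : Type*} [DecidableEq ι] [Group M] [Group Q]
    (hM : Subgroup.center M = ⊥) (ψ : (ι → M) →* Q) :
    Function.Injective (ψ.comp (Function.ExtendByOne.hom M
      (Subtype.val : {i // ψ.ker.comap (MonoidHom.mulSingle _ i) = ⊥} → ι))) := by
  rw [injective_iff_map_eq_one]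
  intro u hu
  funext i
  have := ψ.normal_ker.apply_eq_one_of_comap_mulSingle_eq_bot hM i.2 hu
  rwa [Function.ExtendByOne.hom_apply, Subtype.val_injective.extend_apply] at this

theorem HasProdRank.of_injective {G ι : Type*} [Group G] [Fintype ι]
    {φ : (ι → FreeGroup Bool) →* G} (hφ : Function.Injective φ) : HasProdRank G (Fintype.card ι) :=
  let e := MulEquiv.arrowCongr (Fintype.equivFin ι).symm (MulEquiv.refl (FreeGroup Bool))
  ⟨φ.comp e.toMonoidHom, hφ.comp e.injective⟩

theorem HasProdRank.of_range_le_range {N G ι : Type*} [Group N] [Group G] [Fintype ι]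
    {f : N →* G} (hf : Function.Injective f) {φ : (ι → FreeGroup Bool) →* G}
    (hφ : Function.Injective φ) (hφf : φ.range ≤ f.range) : HasProdRank N (Fintype.card ι) :=
  HasProdRank.of_injective (φ := (MonoidHom.ofInjective hf).symm.toMonoidHom.comp
    (φ.codRestrict f.range fun x => hφf ⟨x, rfl⟩))
    ((MonoidHom.ofInjective hf).symm.injective.comp fun _ _ h => hφ (congrArg Subtype.val h))

theorem stmt4_general {N G Q : Type*} [Group N] [Group G] [Group Q]
    (f : N →* G) (g : G →* Q) (hf : Function.Injective f)
    (hexact : f.range = g.ker) (k : ℕ) (hk : HasProdRank G k) :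
    ∃ l m : ℕ, k ≤ l + m ∧ HasProdRank N l ∧ HasProdRank Q m := by
  classical
  obtain ⟨φ, hφ⟩ := hk
  set ψ := g.comp φ
  obtain ⟨ε, hε, hεK⟩ := ψ.normal_ker.exists_injective_pi_freeGroup
  have hcard := Fintype.card_congr <|
    Equiv.sumCompl fun i => ψ.ker.comap (MonoidHom.mulSingle _ i) = ⊥
  rw [Fintype.card_sum, Fintype.card_fin] at hcard
  have hN : HasProdRank N _ := HasProdRank.of_range_le_range (φ := φ.comp ε) hf (hφ.comp hε) <| by
    rw [MonoidHom.range_comp, hexact]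
    exact Subgroup.map_le_iff_le_comap.mpr hεK
  have hQ := HasProdRank.of_injective (ψ.injective_comp_extendByOne FreeGroup.center_eq_bot)
  exact ⟨_, _, hcard.ge.trans_eq (add_comm _ _), hN, hQ⟩

/-- If `1 → N → G → Q → 1` is a short exact sequence of groups then
`rk_F(G) ≤ rk_F(N) + rk_F(Q)`. -/
theorem stmt4 {N G Q : Type*} [Group N] [Group G] [Group Q]
    (f : N →* G) (g : G →* Q) (hf : Function.Injective f) (hg : Function.Surjective g)
    (hexact : f.range = g.ker) (k : ℕ) (hk : HasProdRank G k) :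
    ∃ l m : ℕ, k ≤ l + m ∧ HasProdRank N l ∧ HasProdRank Q m :=
  stmt4_general f g hf hexact k hk
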